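/- Let A = (A_1, …, A_n) be a row contraction (n ≥ 2) with Φ(X) = ∑ A_i X A_i*, and suppose rank(I − Φ(I)) < ∞. Then the limit lim_{k→∞} rank(I − Φ^k(I))/n^k exists. -/

import Mathlib

/-!
Since `I - Φ^[k+1](I) = (I - Φ(I)) + Φ(I - Φ^[k](I))` and `Φ` multiplies ranks by at most `n`,
the ranks `r k` satisfy `r (k + 1) ≤ n * r k + d` with `d = rank (I - Φ(I))`. Hence
`(r k + d / (n - 1)) / n ^ k` is nonincreasing and nonnegative, so it converges, and it differs
from `r k / n ^ k` by `d / (n - 1) / n ^ k → 0`.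
-/

open ContinuousLinearMap in
/-- The completely positive map `Φ(X) = ∑ Aᵢ X Aᵢ*` associated to a tuple of operators. -/
noncomputable def Phi {H : Type*} [NormedAddCommGroup H] [InnerProductSpace ℂ H]
    [CompleteSpace H] {n : ℕ} (A : Fin n → H →L[ℂ] H) (X : H →L[ℂ] H) : H →L[ℂ] H :=
  ∑ i, A i ∘L X ∘L adjoint (A i)

open Filter Topology in
theorem exists_tendsto_div_pow_of_le_mul_add {u : ℕ → ℝ} {a d : ℝ} (ha : 1 < a)
    (hu : ∀ k, 0 ≤ u k) (hd : 0 ≤ d) (hrec : ∀ k, u (k + 1) ≤ a * u k + d) :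
    ∃ l, Tendsto (fun k => u k / a ^ k) atTop (𝓝 l) := by
  set c := d / (a - 1)
  have hc : (a - 1) * c = d := mul_div_cancel₀ d (sub_pos.2 ha).ne'
  have ha0 : 0 < a := by linarith
  have hanti : Antitone fun k => (u k + c) / a ^ k := by
    refine antitone_nat_of_succ_le fun k => ?_
    rw [pow_succ', ← div_div, div_le_div_iff_of_pos_right (by positivity)]
    rw [div_le_iff₀ ha0]
    linarith [hrec k]
  have hbdd : BddBelow (Set.range fun k => (u k + c) / a ^ k) :=
    ⟨0, by rintro _ ⟨k, rfl⟩; have := hu k; positivity⟩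
  have hgeom : Tendsto (fun k => c * (a⁻¹) ^ k) atTop (𝓝 0) := by
    simpa using
      (tendsto_pow_atTop_nhds_zero_of_lt_one (by positivity) (inv_lt_one_of_one_lt₀ ha)).const_mul c
  have hlim := (tendsto_atTop_ciInf hanti hbdd).sub hgeom
  rw [sub_zero] at hlim
  refine ⟨_, hlim.congr fun k => ?_⟩
  rw [inv_pow, add_div, div_eq_mul_inv c, add_sub_cancel_right]

open Cardinal in
theorem Cardinal.toNat_succ_le_of_le_add_mul {r : ℕ → Cardinal} {c : Cardinal} {n : ℕ}
    (hc : c < ℵ₀) (h0 : r 0 < ℵ₀) (h : ∀ k, r (k + 1) ≤ n * r k + c) (k : ℕ) :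
    (r (k + 1)).toNat ≤ n * (r k).toNat + c.toNat := by
  have hfin : ∀ k, r k < ℵ₀ := fun k => by
    induction k with
    | zero => exact h0
    | succ k ih => exact (h k).trans_lt (add_lt_aleph0 (mul_lt_aleph0 natCast_lt_aleph0 ih) hc)
  have hmul : n * r k < ℵ₀ := mul_lt_aleph0 natCast_lt_aleph0 (hfin k)
  simpa [toNat_add hmul hc] using toNat_le_toNat (h k) (add_lt_aleph0 hmul hc)

section Phi

open ContinuousLinearMap

variable {H : Type*} [NormedAddCommGroup H] [InnerProductSpace ℂ H] [CompleteSpace H] {n : ℕ}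
  (A : Fin n → H →L[ℂ] H)

theorem Phi_sub (X Y : H →L[ℂ] H) : Phi A (X - Y) = Phi A X - Phi A Y := by
  simp [Phi, comp_sub, sub_comp, Finset.sum_sub_distrib]

theorem one_sub_Phi_iterate_succ (k : ℕ) :
    1 - (Phi A)^[k + 1] 1 = (1 - Phi A 1) + Phi A (1 - (Phi A)^[k] 1) := by
  rw [Function.iterate_succ_apply', Phi_sub]
  abel

theorem rank_Phi_le (X : H →L[ℂ] H) :
    (Phi A X : H →ₗ[ℂ] H).rank ≤ n * (X : H →ₗ[ℂ] H).rank := by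
  calc (Phi A X : H →ₗ[ℂ] H).rank
      ≤ ∑ i, ((A i : H →ₗ[ℂ] H) ∘ₗ (X : H →ₗ[ℂ] H) ∘ₗ (adjoint (A i) : H →ₗ[ℂ] H)).rank := by
        simpa [Phi] using LinearMap.rank_finsetSum_le _ _
    _ ≤ ∑ _i : Fin n, (X : H →ₗ[ℂ] H).rank := Finset.sum_le_sum fun i _ =>
        (LinearMap.rank_comp_le_right _ _).trans (LinearMap.rank_comp_le_left _ _)
    _ = n * (X : H →ₗ[ℂ] H).rank := by simp

theorem rank_one_sub_Phi_iterate_succ_le (k : ℕ) :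
    (↑(1 - (Phi A)^[k + 1] 1) : H →ₗ[ℂ] H).rank ≤
      n * (↑(1 - (Phi A)^[k] 1) : H →ₗ[ℂ] H).rank + (↑(1 - Phi A 1) : H →ₗ[ℂ] H).rank := by
  rw [one_sub_Phi_iterate_succ, toLinearMap_add, add_comm]
  exact (LinearMap.rank_add_le _ _).trans (add_le_add (rank_Phi_le A _) le_rfl)

end Phi

theorem stmt8_general {H : Type*} [NormedAddCommGroup H] [InnerProductSpace ℂ H] [CompleteSpace H]
    {n : ℕ} (hn : 2 ≤ n) (A : Fin n → H →L[ℂ] H)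
    (hfr : FiniteDimensional ℂ (LinearMap.range ((1 - Phi A 1 : H →L[ℂ] H) : H →ₗ[ℂ] H))) :
    ∃ l : ℝ, Filter.Tendsto
      (fun k : ℕ => (Module.finrank ℂ (LinearMap.range ((1 - (Phi A)^[k] 1 : H →L[ℂ] H) : H →ₗ[ℂ] H)) : ℝ) / (n : ℝ) ^ k)
      Filter.atTop (nhds l) := by
  have hrec := Cardinal.toNat_succ_le_of_le_add_mul
    (r := fun k => (↑(1 - (Phi A)^[k] 1) : H →ₗ[ℂ] H).rank) (Module.rank_lt_aleph0 ℂ _)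
    (by simpa using Cardinal.aleph0_pos) (rank_one_sub_Phi_iterate_succ_le A)
  exact exists_tendsto_div_pow_of_le_mul_add (by exact_mod_cast hn) (fun k => by positivity)
    (Nat.cast_nonneg _) fun k => by exact_mod_cast hrec k

/-- For a row contraction (`n ≥ 2`) with `I − Φ(I)` of finite rank, the limit
`lim_k rank(I − Φ^k(I)) / n^k` exists. -/
theorem stmt8 {H : Type*} [NormedAddCommGroup H] [InnerProductSpace ℂ H] [CompleteSpace H]
    {n : ℕ} (hn : 2 ≤ n) (A : Fin n → H →L[ℂ] H)
    (hA : (1 - Phi A 1).IsPositive)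
    (hfr : FiniteDimensional ℂ (LinearMap.range ((1 - Phi A 1 : H →L[ℂ] H) : H →ₗ[ℂ] H))) :
    ∃ l : ℝ, Filter.Tendsto
      (fun k : ℕ => (Module.finrank ℂ (LinearMap.range ((1 - (Phi A)^[k] 1 : H →L[ℂ] H) : H →ₗ[ℂ] H)) : ℝ) / (n : ℝ) ^ k)
      Filter.atTop (nhds l) :=
  stmt8_general hn A hfr
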